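/- Fix m ∈ M with ‖m‖₁ > 0, and let t_m = sup_{s' ∈ S} D_m(s') / 2. If c ∈ M minimizes cross-entropy, i.e., CE_m(c) = inf_{c' ∈ M} CE_m(c'), then the segmentation obtained by thresholding c at t_m maximizes Dice: D_m(I_{[t_m,1]} ∘ c) = sup_{s' ∈ S} D_m(s'). -/

import Mathlib

open MeasureTheory Real Set
open scoped ENNReal

noncomputable section

/-- The unit cube `Ω = [0,1]^n` in `ℝ^n`. -/
def cube (n : ℕ) : Set (EuclideanSpace ℝ (Fin n)) :=
  WithLp.ofLp ⁻¹' (Set.univ.pi fun _ => Set.Icc (0:ℝ) 1)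

/-- Lebesgue measure restricted to the unit cube. -/
def lam (n : ℕ) : Measure (EuclideanSpace ℝ (Fin n)) := volume.restrict (cube n)

/-- `S`: measurable functions `Ω → {0,1}` (as real-valued functions on `ℝ^n`). -/
def IsSeg {n : ℕ} (s : EuclideanSpace ℝ (Fin n) → ℝ) : Prop :=
  Measurable s ∧ ∀ ω, s ω = 0 ∨ s ω = 1

/-- `M`: measurable functions `Ω → [0,1]`. -/
def IsSoft {n : ℕ} (m : EuclideanSpace ℝ (Fin n) → ℝ) : Prop :=
  Measurable m ∧ ∀ ω, m ω ∈ Set.Icc (0:ℝ) 1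

/-- `‖f‖₁ = ∫_Ω |f| dλ`. -/
def l1 {n : ℕ} (f : EuclideanSpace ℝ (Fin n) → ℝ) : ℝ := ∫ ω, |f ω| ∂(lam n)

/-- Accuracy `A_m(s)`. -/
def accur {n : ℕ} (m s : EuclideanSpace ℝ (Fin n) → ℝ) : ℝ :=
  ∫ ω, (s ω * m ω + (1 - s ω) * (1 - m ω)) ∂(lam n)

/-- Dice `D_m(s)`. -/
def dice {n : ℕ} (m s : EuclideanSpace ℝ (Fin n) → ℝ) : ℝ :=
  2 * (∫ ω, s ω * m ω ∂(lam n)) / (l1 s + l1 m)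

/-- soft-Dice `SD_m(c)`. -/
def sdice {n : ℕ} (m c : EuclideanSpace ℝ (Fin n) → ℝ) : ℝ :=
  1 - 2 * (∫ ω, c ω * m ω ∂(lam n)) / (l1 c + l1 m)

/-- pointwise cross-entropy term `-(m log c)` in `[0,∞]`, with `0·log 0 = 0`, `log 0 = -∞`. -/
def ceTerm (m c : ℝ) : ℝ≥0∞ :=
  if m = 0 then 0 else if c = 0 then ⊤ else ENNReal.ofReal (-(m * Real.log c))

/-- cross-entropy `CE_m(c) ∈ [0,∞]`. -/
def crossEnt {n : ℕ} (m c : EuclideanSpace ℝ (Fin n) → ℝ) : ℝ≥0∞ :=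
  ∫⁻ ω, (ceTerm (m ω) (c ω) + ceTerm (1 - m ω) (1 - c ω)) ∂(lam n)

/-- the thresholded segmentation `I_{[t,1]} ∘ c`. -/
def thresh {n : ℕ} (t : ℝ) (c : EuclideanSpace ℝ (Fin n) → ℝ) :
    EuclideanSpace ℝ (Fin n) → ℝ := fun ω => if t ≤ c ω then 1 else 0

/-- `sup_{s' ∈ S} D_m(s')`. -/
def supDice {n : ℕ} (m : EuclideanSpace ℝ (Fin n) → ℝ) : ℝ :=
  ⨆ s' : {s' : EuclideanSpace ℝ (Fin n) → ℝ // IsSeg s'}, dice m s'.1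

/-- the centered isotropic Gaussian density `p_{σ²}` on `ℝ^n`. -/
def pdens (n : ℕ) (σ2 : ℝ) (x : EuclideanSpace ℝ (Fin n)) : ℝ :=
  (2 * π * σ2) ^ (-(n:ℝ)/2) * Real.exp (-‖x‖^2 / (2 * σ2))

-- ===== BEGIN auxiliary lemmas =====
-- ===== auxiliary lemmas =====

instance lamFinite (n : ℕ) : IsFiniteMeasure (lam n) := by
  constructor
  rw [lam, Measure.restrict_apply_univ]
  exact ((PiLp.homeomorph 2 _).isCompact_preimage.mpr (isCompact_univ_pi fun _ => isCompact_Icc) :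
    IsCompact (cube n)).measure_lt_top

lemma gibbs_le {m c : ℝ} (hm0 : 0 < m) (hm1 : m < 1) (hc0 : 0 < c) (hc1 : c < 1) :
    (-(m * Real.log m)) + (-((1-m) * Real.log (1-m)))
      ≤ (-(m * Real.log c)) + (-((1-m) * Real.log (1-c))) := by
  have h1 : Real.log (c / m) ≤ c / m - 1 := Real.log_le_sub_one_of_pos (by positivity)
  have h2 : Real.log ((1-c)/(1-m)) ≤ (1-c)/(1-m) - 1 :=
    Real.log_le_sub_one_of_pos (by apply div_pos <;> linarith)
  rw [Real.log_div hc0.ne' hm0.ne'] at h1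
  rw [Real.log_div (by linarith) (by intro h; linarith [h] : (1:ℝ)-m ≠ 0)] at h2
  have h1' : m * (Real.log c - Real.log m) ≤ c - m := by
    have := mul_le_mul_of_nonneg_left h1 hm0.le
    have hh : m * (c / m - 1) = c - m := by field_simp
    linarith [hh ▸ this]
  have h2' : (1-m) * (Real.log (1-c) - Real.log (1-m)) ≤ m - c := by
    have hpos : (0:ℝ) < 1 - m := by linarith
    have := mul_le_mul_of_nonneg_left h2 hpos.le
    have hh : (1-m) * ((1-c) / (1-m) - 1) = m - c := by field_simp; ring
    linarith [hh ▸ this]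
  nlinarith [h1', h2']

lemma gibbs_lt {m c : ℝ} (hm0 : 0 < m) (hm1 : m < 1) (hc0 : 0 < c) (hc1 : c < 1)
    (hne : c ≠ m) :
    (-(m * Real.log m)) + (-((1-m) * Real.log (1-m)))
      < (-(m * Real.log c)) + (-((1-m) * Real.log (1-c))) := by
  have h1 : Real.log (c / m) < c / m - 1 := by
    refine Real.log_lt_sub_one_of_pos (by positivity) ?_
    intro h
    exact hne (by field_simp at h; linarith)
  have h2 : Real.log ((1-c)/(1-m)) ≤ (1-c)/(1-m) - 1 :=
    Real.log_le_sub_one_of_pos (by apply div_pos <;> linarith)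
  rw [Real.log_div hc0.ne' hm0.ne'] at h1
  rw [Real.log_div (by linarith) (by intro h; linarith [h] : (1:ℝ)-m ≠ 0)] at h2
  have h1' : m * (Real.log c - Real.log m) < c - m := by
    have := mul_lt_mul_of_pos_left h1 hm0
    have hh : m * (c / m - 1) = c - m := by field_simp
    linarith [hh ▸ this]
  have h2' : (1-m) * (Real.log (1-c) - Real.log (1-m)) ≤ m - c := by
    have hpos : (0:ℝ) < 1 - m := by linarith
    have := mul_le_mul_of_nonneg_left h2 hpos.le
    have hh : (1-m) * ((1-c) / (1-m) - 1) = m - c := by field_simp; ring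
    linarith [hh ▸ this]
  nlinarith [h1', h2']

lemma neg_mul_log_nonneg {x : ℝ} (hx0 : 0 ≤ x) (hx1 : x ≤ 1) : 0 ≤ -(x * Real.log x) := by
  have := Real.log_nonpos hx0 hx1
  nlinarith

lemma neg_mul_log_le_one {x : ℝ} (hx0 : 0 < x) (hx1 : x ≤ 1) : -(x * Real.log x) ≤ 1 := by
  have h : Real.log x⁻¹ ≤ x⁻¹ - 1 := Real.log_le_sub_one_of_pos (by positivity)
  rw [Real.log_inv] at h
  have := mul_le_mul_of_nonneg_left h hx0.le
  have hh : x * (x⁻¹ - 1) = 1 - x := by field_simp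
  nlinarith [hh ▸ this]

lemma ceTerm_self_le_one {x : ℝ} (hx : x ∈ Icc (0:ℝ) 1) : ceTerm x x ≤ 1 := by
  rcases eq_or_lt_of_le hx.1 with h0 | h0
  · simp [ceTerm, ← h0]
  · rw [ceTerm, if_neg h0.ne', if_neg h0.ne']
    calc ENNReal.ofReal (-(x * Real.log x)) ≤ ENNReal.ofReal 1 :=
          ENNReal.ofReal_le_ofReal (neg_mul_log_le_one h0 hx.2)
      _ = 1 := ENNReal.ofReal_one

/-- pointwise: `E m ≤ F m c`, and equality implies `c = m`. -/
lemma ceF_le_and_eq {m c : ℝ} (hm : m ∈ Icc (0:ℝ) 1) (hc : c ∈ Icc (0:ℝ) 1) :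
    ceTerm m m + ceTerm (1-m) (1-m) ≤ ceTerm m c + ceTerm (1-m) (1-c) ∧
    (ceTerm m m + ceTerm (1-m) (1-m) = ceTerm m c + ceTerm (1-m) (1-c) → c = m) := by
  obtain ⟨hm0, hm1⟩ := hm
  obtain ⟨hc0, hc1⟩ := hc
  rcases eq_or_lt_of_le hm0 with h0 | h0
  · -- m = 0
    have hE : ceTerm m m + ceTerm (1-m) (1-m) = 0 := by
      rw [← h0]; norm_num [ceTerm, Real.log_one]
    rw [hE]
    refine ⟨zero_le, fun h => ?_⟩
    rw [← h0]
    have hF : ceTerm m c + ceTerm (1-m) (1-c) = ceTerm 1 (1-c) := by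
      rw [← h0]; norm_num [ceTerm]
    rw [hF] at h
    by_contra hne
    have hcpos : 0 < c := lt_of_le_of_ne hc0 (fun a => hne a.symm)
    rcases eq_or_lt_of_le hc1 with hc1' | hc1'
    · rw [ceTerm, if_neg one_ne_zero, if_pos (by rw [hc1']; ring)] at h
      exact (by simp : (0:ℝ≥0∞) ≠ ⊤) h
    · rw [ceTerm, if_neg one_ne_zero, if_neg (by intro hh; linarith)] at h
      have := ENNReal.ofReal_eq_zero.mp h.symm
      have hlog : Real.log (1-c) < 0 := Real.log_neg (by linarith) (by linarith)
      nlinarith [this, hlog]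
  rcases eq_or_lt_of_le hm1 with h1 | h1
  · -- m = 1
    have hE : ceTerm m m + ceTerm (1-m) (1-m) = 0 := by
      rw [h1]; norm_num [ceTerm, Real.log_one]
    rw [hE]
    refine ⟨zero_le, fun h => ?_⟩
    rw [h1]
    have hF : ceTerm m c + ceTerm (1-m) (1-c) = ceTerm 1 c := by
      rw [h1]; norm_num [ceTerm]
    rw [hF] at h
    by_contra hne
    have hclt : c < 1 := lt_of_le_of_ne hc1 hne
    rcases eq_or_lt_of_le hc0 with hc0' | hc0'
    · rw [ceTerm, if_neg one_ne_zero, if_pos hc0'.symm] at h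
      exact (by simp : (0:ℝ≥0∞) ≠ ⊤) h
    · rw [ceTerm, if_neg one_ne_zero, if_neg hc0'.ne'] at h
      have := ENNReal.ofReal_eq_zero.mp h.symm
      have hlog : Real.log c < 0 := Real.log_neg hc0' hclt
      nlinarith [this, hlog]
  · -- 0 < m < 1
    have hm1' : (0:ℝ) < 1 - m := by linarith
    have ha1 : 0 ≤ -(m * Real.log m) := neg_mul_log_nonneg h0.le hm1
    have ha2 : 0 ≤ -((1-m) * Real.log (1-m)) := by
      have := neg_mul_log_nonneg hm1'.le (by linarith : 1-m ≤ 1)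
      linarith
    have hE : ceTerm m m + ceTerm (1-m) (1-m)
        = ENNReal.ofReal ((-(m * Real.log m)) + (-((1-m) * Real.log (1-m)))) := by
      rw [ceTerm, if_neg h0.ne', if_neg h0.ne', ceTerm, if_neg hm1'.ne', if_neg hm1'.ne',
        ENNReal.ofReal_add ha1 ha2]
    rcases eq_or_lt_of_le hc0 with hcz | hcz
    · -- c = 0
      have hF : ceTerm m c + ceTerm (1-m) (1-c) = ⊤ := by
        rw [ceTerm, if_neg h0.ne', if_pos hcz.symm, top_add]
      rw [hF, hE]
      exact ⟨le_top, fun h => absurd h ENNReal.ofReal_ne_top⟩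
    rcases eq_or_lt_of_le hc1 with hco | hco
    · -- c = 1
      have hF : ceTerm (1-m) (1-c) = ⊤ := by
        rw [ceTerm, if_neg hm1'.ne', if_pos (by rw [hco]; norm_num)]
      rw [hE, hF, add_top]
      exact ⟨le_top, fun h => absurd h ENNReal.ofReal_ne_top⟩
    · -- 0 < c < 1
      have hc1' : (0:ℝ) < 1 - c := by linarith
      have hb1 : 0 ≤ -(m * Real.log c) := by
        have := Real.log_nonpos hcz.le hco.le; nlinarith
      have hb2 : 0 ≤ -((1-m) * Real.log (1-c)) := by
        have := Real.log_nonpos hc1'.le (by linarith : 1-c ≤ 1); nlinarith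
      have hF : ceTerm m c + ceTerm (1-m) (1-c)
          = ENNReal.ofReal ((-(m * Real.log c)) + (-((1-m) * Real.log (1-c)))) := by
        rw [ceTerm, if_neg h0.ne', if_neg hcz.ne', ceTerm, if_neg hm1'.ne', if_neg hc1'.ne',
          ENNReal.ofReal_add hb1 hb2]
      rw [hE, hF]
      constructor
      · exact ENNReal.ofReal_le_ofReal (gibbs_le h0 h1 hcz hco)
      · intro h
        have heq := (ENNReal.ofReal_eq_ofReal_iff (by linarith) (by linarith)).mp h
        by_contra hne
        have := gibbs_lt h0 h1 hcz hco hne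
        linarith

variable {n : ℕ}

lemma measurable_ceTerm_comp {f g : EuclideanSpace ℝ (Fin n) → ℝ}
    (hf : Measurable f) (hg : Measurable g) :
    Measurable fun ω => ceTerm (f ω) (g ω) := by
  unfold ceTerm
  refine Measurable.ite (hf (measurableSet_singleton 0)) measurable_const ?_
  refine Measurable.ite (hg (measurableSet_singleton 0)) measurable_const ?_
  exact ENNReal.measurable_ofReal.comp ((hf.mul (Real.measurable_log.comp hg)).neg)

/-- a CE minimizer equals `m` a.e. -/
lemma ce_min_ae_eq (m c : EuclideanSpace ℝ (Fin n) → ℝ)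
    (hm : IsSoft m) (hc : IsSoft c)
    (hmin : crossEnt m c
      = (⨅ c' : {c' : EuclideanSpace ℝ (Fin n) → ℝ // IsSoft c'}, crossEnt m c'.1)) :
    c =ᶠ[ae (lam n)] m := by
  set φ : EuclideanSpace ℝ (Fin n) → ℝ≥0∞ :=
    fun ω => ceTerm (m ω) (c ω) + ceTerm (1 - m ω) (1 - c ω) with hφ
  set ψ : EuclideanSpace ℝ (Fin n) → ℝ≥0∞ :=
    fun ω => ceTerm (m ω) (m ω) + ceTerm (1 - m ω) (1 - m ω) with hψ
  have hmbd : ∀ ω, m ω ∈ Icc (0:ℝ) 1 := hm.2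
  have hcbd : ∀ ω, c ω ∈ Icc (0:ℝ) 1 := hc.2
  have hpt : ∀ ω, ψ ω ≤ φ ω := fun ω => (ceF_le_and_eq (hmbd ω) (hcbd ω)).1
  have hψm : Measurable ψ :=
    (measurable_ceTerm_comp hm.1 hm.1).add
      (measurable_ceTerm_comp (measurable_const.sub hm.1) (measurable_const.sub hm.1))
  have hφm : Measurable φ :=
    (measurable_ceTerm_comp hm.1 hc.1).add
      (measurable_ceTerm_comp (measurable_const.sub hm.1) (measurable_const.sub hc.1))
  have hψbd : ∀ ω, ψ ω ≤ 2 := by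
    intro ω
    have h1 := ceTerm_self_le_one (hmbd ω)
    have h2 : ceTerm (1 - m ω) (1 - m ω) ≤ 1 := by
      refine ceTerm_self_le_one ⟨?_, ?_⟩ <;> [linarith [(hmbd ω).2]; linarith [(hmbd ω).1]]
    calc ψ ω ≤ 1 + 1 := add_le_add h1 h2
      _ = 2 := one_add_one_eq_two
  have hψfin : ∫⁻ ω, ψ ω ∂(lam n) ≠ ⊤ := by
    refine ne_of_lt (lt_of_le_of_lt (lintegral_mono hψbd) ?_)
    rw [lintegral_const]
    exact ENNReal.mul_lt_top (by simp) (measure_lt_top _ _)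
  have hle : ∫⁻ ω, φ ω ∂(lam n) ≤ ∫⁻ ω, ψ ω ∂(lam n) := by
    have : crossEnt m c ≤ crossEnt m m := by
      rw [hmin]
      exact iInf_le (fun c' : {c' : EuclideanSpace ℝ (Fin n) → ℝ // IsSoft c'} =>
        crossEnt m c'.1) ⟨m, hm⟩
    exact this
  have hge : ∫⁻ ω, ψ ω ∂(lam n) ≤ ∫⁻ ω, φ ω ∂(lam n) := lintegral_mono hpt
  have heqI : ∫⁻ ω, φ ω ∂(lam n) = ∫⁻ ω, ψ ω ∂(lam n) := le_antisymm hle hge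
  have hzero : ∫⁻ ω, (φ ω - ψ ω) ∂(lam n) = 0 := by
    rw [lintegral_sub hψm hψfin (Filter.Eventually.of_forall hpt), heqI, tsub_self]
  have hae : ∀ᵐ ω ∂(lam n), φ ω - ψ ω = 0 :=
    (lintegral_eq_zero_iff (hφm.sub hψm)).mp hzero
  filter_upwards [hae] with ω hω
  have hφψ : φ ω = ψ ω := by
    have hle' : φ ω ≤ ψ ω := tsub_eq_zero_iff_le.mp hω
    exact le_antisymm hle' (hpt ω)
  exact (ceF_le_and_eq (hmbd ω) (hcbd ω)).2 hφψ.symm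

lemma integrable_of_bdd {f : EuclideanSpace ℝ (Fin n) → ℝ} {C : ℝ}
    (hf : Measurable f) (hb : ∀ ω, |f ω| ≤ C) : Integrable f (lam n) :=
  ⟨hf.aestronglyMeasurable, HasFiniteIntegral.of_bounded (C := C)
    (Filter.Eventually.of_forall fun ω => by simpa using hb ω)⟩

lemma isSeg_thresh (t : ℝ) {f : EuclideanSpace ℝ (Fin n) → ℝ} (hf : Measurable f) :
    IsSeg (thresh t f) := by
  constructor
  · exact Measurable.ite (measurableSet_le measurable_const hf)
      measurable_const measurable_const
  · intro ω
    by_cases h : t ≤ f ω <;> simp [thresh, h]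

lemma seg_bounds {s : EuclideanSpace ℝ (Fin n) → ℝ} (hs : IsSeg s) (ω) :
    0 ≤ s ω ∧ s ω ≤ 1 := by
  rcases hs.2 ω with h | h <;> rw [h] <;> norm_num

lemma l1_eq_integral {s : EuclideanSpace ℝ (Fin n) → ℝ} (h : ∀ ω, 0 ≤ s ω) :
    l1 s = ∫ ω, s ω ∂(lam n) :=
  integral_congr_ae (Filter.Eventually.of_forall fun ω => abs_of_nonneg (h ω))

/-- key computation: the thresholded `m` attains the Dice supremum. -/
lemma dice_thresh_m (m : EuclideanSpace ℝ (Fin n) → ℝ)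
    (hm : IsSoft m) (hm1 : 0 < l1 m) :
    dice m (thresh (supDice m / 2) m) = supDice m := by
  haveI : Nonempty {s' : EuclideanSpace ℝ (Fin n) → ℝ // IsSeg s'} :=
    ⟨⟨fun _ => 0, measurable_const, fun _ => Or.inl rfl⟩⟩
  set T := supDice m with hT
  have hmbd := hm.2
  have hmint : Integrable m (lam n) := integrable_of_bdd (C := 1) hm.1
    (fun ω => abs_le.mpr ⟨by linarith [(hmbd ω).1], (hmbd ω).2⟩)
  have hl1m : l1 m = ∫ ω, m ω ∂(lam n) := l1_eq_integral fun ω => (hmbd ω).1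
  -- generic facts about segmentations
  have hsint : ∀ s : EuclideanSpace ℝ (Fin n) → ℝ, IsSeg s → Integrable s (lam n) :=
    fun s hs => integrable_of_bdd (C := 1) hs.1
      (fun ω => abs_le.mpr ⟨by linarith [(seg_bounds hs ω).1], (seg_bounds hs ω).2⟩)
  have hsmint : ∀ s : EuclideanSpace ℝ (Fin n) → ℝ, IsSeg s →
      Integrable (fun ω => s ω * m ω) (lam n) := by
    intro s hs
    refine integrable_of_bdd (C := 1) (hs.1.mul hm.1) (fun ω => ?_)
    rw [abs_mul]
    have := seg_bounds hs ω
    have := hmbd ω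
    calc |s ω| * |m ω| ≤ 1 * 1 := by
          apply mul_le_mul <;> simp [abs_le] <;> constructor <;> linarith [this.1, this.2,
            (seg_bounds hs ω).1, (seg_bounds hs ω).2]
      _ = 1 := one_mul 1
  have hInum : ∀ s : EuclideanSpace ℝ (Fin n) → ℝ, IsSeg s →
      ∫ ω, s ω * m ω ∂(lam n) ≤ l1 m := by
    intro s hs
    rw [hl1m]
    refine integral_mono (hsmint s hs) hmint (fun ω => ?_)
    have h1 := seg_bounds hs ω
    have h2 := hmbd ω
    nlinarith [h1.1, h1.2, h2.1]
  have hl1s_nonneg : ∀ s : EuclideanSpace ℝ (Fin n) → ℝ, l1 s ≥ 0 :=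
    fun s => integral_nonneg fun ω => abs_nonneg _
  -- dice is bounded above by 2
  have hbdd : BddAbove (Set.range fun s' : {s' : EuclideanSpace ℝ (Fin n) → ℝ // IsSeg s'} =>
      dice m s'.1) := by
    refine ⟨2, fun x hx => ?_⟩
    obtain ⟨⟨s, hs⟩, rfl⟩ := hx
    show dice m s ≤ 2
    have h1 := hInum s hs
    have h2 := hl1s_nonneg s
    have hden : 0 < l1 s + l1 m := by linarith
    have hd : dice m s = 2 * (∫ ω, s ω * m ω ∂(lam n)) / (l1 s + l1 m) := rfl
    rw [hd, div_le_iff₀ hden]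
    linarith
  -- s* := thresh (T/2) m
  set s₀ := thresh (T/2) m with hs₀
  have hseg₀ : IsSeg s₀ := isSeg_thresh _ hm.1
  have habs2mT : ∀ ω, |2 * m ω - T| ≤ 2 + |T| := by
    intro ω
    have h2 := hmbd ω
    have := le_abs_self T
    have := neg_abs_le T
    rw [abs_le]
    constructor <;> linarith [h2.1, h2.2]
  have hint2 : ∀ s : EuclideanSpace ℝ (Fin n) → ℝ, IsSeg s →
      Integrable (fun ω => s ω * (2 * m ω - T)) (lam n) := by
    intro s hs
    refine integrable_of_bdd (C := 2 + |T|)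
      (hs.1.mul ((measurable_const.mul hm.1).sub measurable_const)) (fun ω => ?_)
    have h1 := seg_bounds hs ω
    have hsa : |s ω| ≤ 1 := abs_le.mpr ⟨by linarith [h1.1], h1.2⟩
    rw [abs_mul]
    calc |s ω| * |2 * m ω - T| ≤ 1 * (2 + |T|) := by
          apply mul_le_mul hsa (habs2mT ω) (abs_nonneg _) zero_le_one
      _ = 2 + |T| := one_mul _
  have e1 : ∀ s' : EuclideanSpace ℝ (Fin n) → ℝ, IsSeg s' →
      2 * (∫ ω, s' ω * m ω ∂(lam n)) - T * ∫ ω, s' ω ∂(lam n)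
        = ∫ ω, s' ω * (2 * m ω - T) ∂(lam n) := by
    intro s' hs'
    rw [← integral_const_mul, ← integral_const_mul, ← integral_sub]
    · congr 1; funext ω; ring
    · exact (hsmint s' hs').const_mul 2
    · exact (hsint s' hs').const_mul T
  -- claim A: s₀ maximizes 2∫sm - T·l1 s
  have claimA : ∀ s : EuclideanSpace ℝ (Fin n) → ℝ, IsSeg s →
      2 * (∫ ω, s ω * m ω ∂(lam n)) - T * l1 s
        ≤ 2 * (∫ ω, s₀ ω * m ω ∂(lam n)) - T * l1 s₀ := by
    intro s hs
    rw [l1_eq_integral (fun ω => (seg_bounds hs ω).1),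
        l1_eq_integral (fun ω => (seg_bounds hseg₀ ω).1), e1 s hs, e1 s₀ hseg₀]
    refine integral_mono (hint2 s hs) (hint2 s₀ hseg₀) (fun ω => ?_)
    have h1 := seg_bounds hs ω
    by_cases hcase : T / 2 ≤ m ω
    · have hone : s₀ ω = 1 := by simp [hs₀, thresh, hcase]
      rw [hone]
      nlinarith [h1.1, h1.2]
    · have hzero : s₀ ω = 0 := by simp [hs₀, thresh, hcase]
      rw [hzero]
      push_neg at hcase
      nlinarith [h1.1, h1.2]
  -- claim B + epsilon argument: 2∫s₀m ≥ T(l1 s₀ + l1 m)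
  set V := (lam n Set.univ).toReal with hV
  have hV0 : 0 ≤ V := ENNReal.toReal_nonneg
  have hl1V : ∀ s : EuclideanSpace ℝ (Fin n) → ℝ, IsSeg s → l1 s ≤ V := by
    intro s hs
    rw [l1_eq_integral (fun ω => (seg_bounds hs ω).1)]
    calc ∫ ω, s ω ∂(lam n) ≤ ∫ _ω, (1:ℝ) ∂(lam n) :=
          integral_mono (hsint s hs) (integrable_const 1) (fun ω => (seg_bounds hs ω).2)
      _ = V := by rw [integral_const]; simp [hV, measureReal_def]
  have hl1mV : l1 m ≤ V := by
    rw [hl1m]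
    calc ∫ ω, m ω ∂(lam n) ≤ ∫ _ω, (1:ℝ) ∂(lam n) :=
          integral_mono hmint (integrable_const 1) (fun ω => (hmbd ω).2)
      _ = V := by rw [integral_const]; simp [hV, measureReal_def]
  have hkey : T * (l1 s₀ + l1 m) ≤ 2 * (∫ ω, s₀ ω * m ω ∂(lam n)) := by
    have : T * l1 m ≤ 2 * (∫ ω, s₀ ω * m ω ∂(lam n)) - T * l1 s₀ := by
      refine le_of_forall_pos_le_add (fun ε hε => ?_)
      have hδ : 0 < ε / (2 * V + 1) := by positivity
      obtain ⟨⟨s, hs⟩, hds⟩ := exists_lt_of_lt_ciSup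
        (show T - ε / (2 * V + 1) < T from by linarith) 
      have hden : 0 < l1 s + l1 m := by linarith [hl1s_nonneg s]
      have hdice : dice m s = 2 * (∫ ω, s ω * m ω ∂(lam n)) / (l1 s + l1 m) := rfl
      rw [hdice, lt_div_iff₀ hden] at hds
      have hsum : l1 s + l1 m ≤ 2 * V := by linarith [hl1V s hs, hl1mV]
      have hA := claimA s hs
      have hδle : ε / (2 * V + 1) * (l1 s + l1 m) ≤ ε := by
        calc ε / (2 * V + 1) * (l1 s + l1 m) ≤ ε / (2 * V + 1) * (2 * V + 1) := by
              apply mul_le_mul_of_nonneg_left (by linarith) hδ.le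
          _ = ε := by field_simp
      nlinarith [hds, hA, hδle]
    linarith
  -- conclude
  have hden₀ : 0 < l1 s₀ + l1 m := by linarith [hl1s_nonneg s₀]
  have hge : T ≤ dice m s₀ := by
    have hd : dice m s₀ = 2 * (∫ ω, s₀ ω * m ω ∂(lam n)) / (l1 s₀ + l1 m) := rfl
    rw [hd, le_div_iff₀ hden₀]
    linarith [hkey]
  have hle : dice m s₀ ≤ T := le_ciSup hbdd ⟨s₀, hseg₀⟩
  linarith

-- ===== END auxiliary lemmas =====

/-- Thresholding a cross-entropy minimizer at `t_m = sup_{s'∈S} D_m(s')/2`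
maximizes Dice. -/

theorem crossEnt_min_implies_dice_max
    (n : ℕ) (hn : 1 ≤ n)
    (m : EuclideanSpace ℝ (Fin n) → ℝ) (hm : IsSoft m) (hm1 : 0 < l1 m)
    (c : EuclideanSpace ℝ (Fin n) → ℝ) (hc : IsSoft c)
    (hmin : crossEnt m c
      = (⨅ c' : {c' : EuclideanSpace ℝ (Fin n) → ℝ // IsSoft c'}, crossEnt m c'.1)) :
    dice m (thresh (supDice m / 2) c)
      = (⨆ s' : {s' : EuclideanSpace ℝ (Fin n) → ℝ // IsSeg s'}, dice m s'.1) := by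
  have hae := ce_min_ae_eq m c hm hc hmin
  have hthr : thresh (supDice m / 2) c =ᶠ[ae (lam n)] thresh (supDice m / 2) m := by
    filter_upwards [hae] with ω hω
    simp [thresh, hω]
  have hnum : ∫ ω, thresh (supDice m / 2) c ω * m ω ∂(lam n)
      = ∫ ω, thresh (supDice m / 2) m ω * m ω ∂(lam n) :=
    integral_congr_ae (hthr.mono fun ω hω => by simp only [hω])
  have hl1 : l1 (thresh (supDice m / 2) c) = l1 (thresh (supDice m / 2) m) :=
    integral_congr_ae (hthr.mono fun ω hω => by simp only [hω])
  have hd : dice m (thresh (supDice m / 2) c) = dice m (thresh (supDice m / 2) m) := by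
    unfold dice
    rw [hnum, hl1]
  rw [hd]
  exact dice_thresh_m m hm hm1
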